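/- arXiv:1602.07216 — 3 statements merged into one kernel-verified Lean document; each statement's English description precedes it below -/
import Mathlib

section
/- Suppose ∫_V M(v)/(μ(p) − v·p) dv > 1 (where the integral may be +∞). Then there exists a unique H(p) > μ(p) − 1 such that ∫_V M(v)/(1 + H(p) − v·p) dv = 1. -/
open MeasureTheory Set Filter Topology
open scoped RealInnerProductSpace ENNReal

/-!
With `s = 1 + H - μ p` and `d v = μ p - ⟪v, p⟫ ≥ 0` on `V`, the function
`F s = ∫ M / (s + d)` is continuous and strictly decreasing on `(0, ∞)` and bounded by
`(∫ M) / s`, while by monotone convergence `F s` increases to the (possibly infinite)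
singular integral as `s ↓ 0`. Since the latter exceeds `1`, the intermediate value theorem
gives exactly one root of `F s = 1`.
-/

lemma norm_div_add_le_of_le {a b r s : ℝ} (hb : 0 ≤ b) (hr : 0 < r) (hrs : r ≤ s) :
    ‖a / (s + b)‖ ≤ ‖a‖ / r := by
  rw [norm_div, Real.norm_of_nonneg (by linarith : 0 ≤ s + b)]
  gcongr
  linarith

lemma eq_zero_of_div_add_eq_div_add {a b s t : ℝ} (hs : 0 < s + b) (ht : 0 < t + b)
    (hst : s ≠ t) (h : a / (s + b) = a / (t + b)) : a = 0 := by
  rw [div_eq_div_iff hs.ne' ht.ne'] at h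
  have : a * (t - s) = 0 := by linarith
  exact (mul_eq_zero.mp this).resolve_right (sub_ne_zero.mpr hst.symm)

section DivAdd

variable {α : Type*} [MeasurableSpace α] {ν : Measure α} {f d : α → ℝ}

lemma aestronglyMeasurable_div_add (hf : Integrable f ν) (hd : AEMeasurable d ν) (s : ℝ) :
    AEStronglyMeasurable (fun x => f x / (s + d x)) ν :=
  (hf.aemeasurable.div (aemeasurable_const.add hd)).aestronglyMeasurable

lemma integrable_div_add (hf : Integrable f ν) (hd : AEMeasurable d ν) (hd0 : 0 ≤ᵐ[ν] d)
    {s : ℝ} (hs : 0 < s) : Integrable (fun x => f x / (s + d x)) ν := by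
  refine (hf.norm.div_const s).mono' (aestronglyMeasurable_div_add hf hd s) ?_
  filter_upwards [hd0] with x hx
  exact norm_div_add_le_of_le hx hs le_rfl

lemma integral_div_add_le (hf : Integrable f ν) (hf0 : 0 ≤ᵐ[ν] f) (hd : AEMeasurable d ν)
    (hd0 : 0 ≤ᵐ[ν] d) {s : ℝ} (hs : 0 < s) :
    ∫ x, f x / (s + d x) ∂ν ≤ (∫ x, f x ∂ν) / s := by
  rw [← integral_div]
  refine integral_mono_ae (integrable_div_add hf hd hd0 hs) (hf.div_const s) ?_
  filter_upwards [hf0, hd0] with x hfx hdx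
  exact div_le_div_of_nonneg_left hfx hs (le_add_of_nonneg_right hdx)

lemma continuousOn_integral_div_add (hf : Integrable f ν) (hd : AEMeasurable d ν)
    (hd0 : 0 ≤ᵐ[ν] d) : ContinuousOn (fun s => ∫ x, f x / (s + d x) ∂ν) (Ioi 0) := by
  intro s₀ hs₀
  have hr : (0 : ℝ) < s₀ / 2 := half_pos hs₀
  refine ContinuousAt.continuousWithinAt <| ContinuousOn.continuousAt ?_
    (isOpen_Ioi.mem_nhds (half_lt_self hs₀))
  refine continuousOn_of_dominated (fun s _ => aestronglyMeasurable_div_add hf hd s)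
    (fun s hs => ?_) (hf.norm.div_const (s₀ / 2)) ?_
  · filter_upwards [hd0] with x hx
    exact norm_div_add_le_of_le hx hr (le_of_lt hs)
  · filter_upwards [hd0] with x hx
    exact continuousOn_const.div (continuousOn_id.add continuousOn_const)
      fun s hs => (add_pos_of_pos_of_nonneg (hr.trans hs) hx).ne'

lemma strictAntiOn_integral_div_add (hf : Integrable f ν) (hf0 : 0 ≤ᵐ[ν] f)
    (hf_ne : ¬f =ᵐ[ν] 0) (hd : AEMeasurable d ν) (hd0 : 0 ≤ᵐ[ν] d) :
    StrictAntiOn (fun s => ∫ x, f x / (s + d x) ∂ν) (Ioi 0) := by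
  intro s hs t ht hst
  rw [mem_Ioi] at hs ht
  have hgap_nonneg : 0 ≤ᵐ[ν] fun x => f x / (s + d x) - f x / (t + d x) := by
    filter_upwards [hf0, hd0] with x hfx hdx
    exact sub_nonneg.mpr
      (div_le_div_of_nonneg_left hfx (add_pos_of_pos_of_nonneg hs hdx) (by linarith))
  have hgap_int := (integrable_div_add hf hd hd0 hs).sub (integrable_div_add hf hd hd0 ht)
  refine lt_of_le_of_ne (sub_nonneg.mp ?_) fun heq => hf_ne ?_
  · rw [← integral_sub (integrable_div_add hf hd hd0 hs) (integrable_div_add hf hd hd0 ht)]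
    exact integral_nonneg_of_ae hgap_nonneg
  · have hgap_zero : ∫ x, (f x / (s + d x) - f x / (t + d x)) ∂ν = 0 := by
      rw [integral_sub (integrable_div_add hf hd hd0 hs) (integrable_div_add hf hd hd0 ht),
        sub_eq_zero]
      exact heq.symm
    filter_upwards [(integral_eq_zero_iff_of_nonneg_ae hgap_nonneg hgap_int).mp hgap_zero, hd0]
      with x hx hdx
    exact eq_zero_of_div_add_eq_div_add (add_pos_of_pos_of_nonneg hs hdx)
      (add_pos_of_pos_of_nonneg ht hdx) hst.ne (sub_eq_zero.mp hx)

lemma ofReal_integral_div_add (hf : Integrable f ν) (hf0 : 0 ≤ᵐ[ν] f) (hd : AEMeasurable d ν)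
    (hd0 : 0 ≤ᵐ[ν] d) {s : ℝ} (hs : 0 < s) :
    ENNReal.ofReal (∫ x, f x / (s + d x) ∂ν) =
      ∫⁻ x, ENNReal.ofReal (f x) / ENNReal.ofReal (s + d x) ∂ν := by
  rw [ofReal_integral_eq_lintegral_ofReal (integrable_div_add hf hd hd0 hs)]
  · refine lintegral_congr_ae ?_
    filter_upwards [hd0] with x hx
    exact ENNReal.ofReal_div_of_pos (add_pos_of_pos_of_nonneg hs hx)
  · filter_upwards [hf0, hd0] with x hfx hdx
    exact div_nonneg hfx (add_nonneg hs.le hdx)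

lemma tendsto_lintegral_div_add {u : ℕ → ℝ} (hu : Antitone u) (hu0 : Tendsto u atTop (𝓝 0))
    (hf : AEMeasurable f ν) (hd : AEMeasurable d ν) :
    Tendsto (fun m => ∫⁻ x, ENNReal.ofReal (f x) / ENNReal.ofReal (u m + d x) ∂ν) atTop
      (𝓝 (∫⁻ x, ENNReal.ofReal (f x) / ENNReal.ofReal (d x) ∂ν)) := by
  refine lintegral_tendsto_of_tendsto_of_monotone
    (fun m => hf.ennreal_ofReal.div (aemeasurable_const.add hd).ennreal_ofReal)
    (Eventually.of_forall fun x m k hmk => ?_) (Eventually.of_forall fun x => ?_)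
  · exact ENNReal.div_le_div_left (ENNReal.ofReal_le_ofReal (by linarith [hu hmk])) _
  · have hden :
        Tendsto (fun m => ENNReal.ofReal (u m + d x)) atTop (𝓝 (ENNReal.ofReal (d x))) :=
      ENNReal.tendsto_ofReal (by simpa using hu0.add_const (d x))
    rcases eq_or_ne (ENNReal.ofReal (f x)) 0 with hfx | hfx
    · simp only [hfx, ENNReal.zero_div, tendsto_const_nhds]
    · exact ENNReal.Tendsto.div tendsto_const_nhds (Or.inl hfx) hden
        (Or.inl ENNReal.ofReal_ne_top)

lemma exists_lt_integral_div_add {c : ℝ} (hf : Integrable f ν) (hf0 : 0 ≤ᵐ[ν] f)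
    (hd : AEMeasurable d ν) (hd0 : 0 ≤ᵐ[ν] d)
    (hc : ENNReal.ofReal c < ∫⁻ x, ENNReal.ofReal (f x) / ENNReal.ofReal (d x) ∂ν) :
    ∃ s, 0 < s ∧ c < ∫ x, f x / (s + d x) ∂ν := by
  have hu : Antitone fun m : ℕ => 1 / ((m : ℝ) + 1) := fun m k hmk =>
    one_div_le_one_div_of_le (by positivity) (by exact_mod_cast Nat.add_le_add_right hmk 1)
  obtain ⟨m, hm⟩ := ((tendsto_lintegral_div_add hu tendsto_one_div_add_atTop_nhds_zero_nat
    hf.aemeasurable hd).eventually_const_lt hc).exists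
  have hs : (0 : ℝ) < 1 / ((m : ℝ) + 1) := by positivity
  rw [← ofReal_integral_div_add hf hf0 hd hd0 hs, ENNReal.ofReal_lt_ofReal_iff'] at hm
  exact ⟨_, hs, hm.1⟩

lemma existsUnique_integral_div_add_eq {c : ℝ} (hf : Integrable f ν) (hf0 : 0 ≤ᵐ[ν] f)
    (hd : AEMeasurable d ν) (hd0 : 0 ≤ᵐ[ν] d) (hc0 : 0 < c)
    (hc : ENNReal.ofReal c < ∫⁻ x, ENNReal.ofReal (f x) / ENNReal.ofReal (d x) ∂ν) :
    ∃! s, 0 < s ∧ ∫ x, f x / (s + d x) ∂ν = c := by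
  set F := fun s => ∫ x, f x / (s + d x) ∂ν
  have hf_ne : ¬f =ᵐ[ν] 0 := fun hf_zero => by
    rw [lintegral_congr_ae (g := fun _ => 0) (hf_zero.mono fun x hx => by simp [hx]),
      lintegral_zero] at hc
    exact ENNReal.not_lt_zero hc
  obtain ⟨s₀, hs₀, hcF₀⟩ := exists_lt_integral_div_add hf hf0 hd hd0 hc
  set s₁ := max s₀ ((∫ x, f x ∂ν) / c + 1)
  have hs₀₁ : s₀ ≤ s₁ := le_max_left _ _
  have hs₁ : 0 < s₁ := hs₀.trans_le hs₀₁
  -- the bound `F s ≤ (∫ f) / s` pushes `F` below `c` at `s₁`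
  have hF₁c : F s₁ < c := by
    refine (integral_div_add_le hf hf0 hd hd0 hs₁).trans_lt ?_
    rw [div_lt_iff₀ hs₁, ← div_lt_iff₀' hc0]
    exact (lt_add_one _).trans_le (le_max_right _ _)
  have hIcc : Icc s₀ s₁ ⊆ Ioi 0 := fun s hs => hs₀.trans_le hs.1
  obtain ⟨s, hs, hFs⟩ := intermediate_value_Icc' hs₀₁
    ((continuousOn_integral_div_add hf hd hd0).mono hIcc) ⟨hF₁c.le, hcF₀.le⟩
  refine ⟨s, ⟨hIcc hs, hFs⟩, fun t ht => ?_⟩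
  exact (strictAntiOn_integral_div_add hf hf0 hf_ne hd hd0).injOn ht.1 (hIcc hs)
    (ht.2.trans hFs.symm)

end DivAdd

theorem stmt_4_general {n : ℕ} (V : Set (EuclideanSpace ℝ (Fin n)))
    (M : EuclideanSpace ℝ (Fin n) → ℝ)
    (hM0 : ∀ v, 0 ≤ M v)
    (hMint : IntegrableOn M V)
    (μ : EuclideanSpace ℝ (Fin n) → ℝ)
    (hμ : ∀ p, IsGreatest ((fun v => ⟪v, p⟫) '' convexHull ℝ V) (μ p))
    (p : EuclideanSpace ℝ (Fin n))
    (hp : 1 < ∫⁻ v in V, ENNReal.ofReal (M v) / ENNReal.ofReal (μ p - ⟪v, p⟫)) :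
    ∃! H : ℝ, μ p - 1 < H ∧ ∫ v in V, M v / (1 + H - ⟪v, p⟫) = 1 := by
  have hgap_meas : Measurable fun v : EuclideanSpace ℝ (Fin n) => μ p - ⟪v, p⟫ :=
    (continuous_const.sub (continuous_id.inner continuous_const)).measurable
  have hgap_nonneg : ∀ᵐ v ∂volume.restrict V, 0 ≤ μ p - ⟪v, p⟫ :=
    (ae_restrict_iff (measurableSet_le measurable_const hgap_meas)).mpr <|
      Eventually.of_forall fun v hv =>
        sub_nonneg.mpr ((hμ p).2 ⟨v, subset_convexHull ℝ V hv, rfl⟩)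
  have hshift : ∀ H, ∫ v in V, M v / (1 + H - ⟪v, p⟫) =
      ∫ v in V, M v / ((1 + H - μ p) + (μ p - ⟪v, p⟫)) := fun H => by
    congr 1
    funext v
    ring
  obtain ⟨s, ⟨hs, hFs⟩, hs_uniq⟩ := existsUnique_integral_div_add_eq hMint
    (Eventually.of_forall hM0) hgap_meas.aemeasurable hgap_nonneg one_pos
    (by rwa [ENNReal.ofReal_one])
  refine ⟨s - 1 + μ p, ⟨by linarith, ?_⟩, fun H ⟨hH, hFH⟩ => ?_⟩
  · rw [hshift]
    convert hFs using 4
    ring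
  · have := hs_uniq (1 + H - μ p) ⟨by linarith, by rwa [← hshift]⟩
    linarith

/-- If ∫_V M(v)/(μ(p) − v·p) dv > 1 (possibly +∞), there is a unique
H(p) > μ(p) − 1 with ∫_V M(v)/(1 + H(p) − v·p) dv = 1. -/
theorem stmt_4 {n : ℕ} (V : Set (EuclideanSpace ℝ (Fin n)))
    (hVc : IsCompact V) (hVne : V.Nonempty)
    (h0 : (0 : EuclideanSpace ℝ (Fin n)) ∈ interior (convexHull ℝ V))
    (M : EuclideanSpace ℝ (Fin n) → ℝ)
    (hM0 : ∀ v, 0 ≤ M v) (hMsupp : Function.support M ⊆ V)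
    (hMint : IntegrableOn M V) (hM1 : ∫ v in V, M v = 1)
    (μ : EuclideanSpace ℝ (Fin n) → ℝ)
    (hμ : ∀ p, IsGreatest ((fun v => ⟪v, p⟫) '' convexHull ℝ V) (μ p))
    (p : EuclideanSpace ℝ (Fin n))
    (hp : 1 < ∫⁻ v in V, ENNReal.ofReal (M v) / ENNReal.ofReal (μ p - ⟪v, p⟫)) :
    ∃! H : ℝ, μ p - 1 < H ∧ ∫ v in V, M v / (1 + H - ⟪v, p⟫) = 1 :=
  stmt_4_general V M hM0 hMint μ hμ p hp
end

section
/- Suppose Q : V → ℝ is a positive integrable function and H ∈ ℝ satisfy H·Q(v) = (v·p − 1)·Q(v) + ∫_V M(v')Q(v') dv' for (almost) all v ∈ V, with ∫_V M Q dv > 0. Then H ≥ μ(p) − 1. -/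
open MeasureTheory Set
open scoped RealInnerProductSpace

/-! The eigenvalue relation `(H + 1 - v·p) Q(v) = ∫_V M Q > 0` with `Q > 0` forces
`v·p ≤ H + 1` almost everywhere on `V`. Since no nonempty relatively open piece of `V` is
negligible and `v ↦ v·p` is continuous, the bound holds on all of `V`, hence, by the maximum
principle for linear functionals, on `Conv(V)`, where `v·p` attains `μ(p)`. -/

-- `V` is not assumed measurable, so `v ∈ V` does not hold `μ.restrict V`-a.e. for free.
theorem forall_le_of_ae_restrict_le {X : Type*} [TopologicalSpace X] [MeasurableSpace X]
    [OpensMeasurableSpace X] {μ : Measure X} {V : Set X}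
    (hess : ∀ U : Set X, IsOpen U → (U ∩ V).Nonempty → 0 < μ (U ∩ V))
    {f : X → ℝ} (hf : Continuous f) {c : ℝ} (hae : ∀ᵐ v ∂μ.restrict V, v ∈ V → f v ≤ c) :
    ∀ v ∈ V, f v ≤ c := by
  intro v hv
  by_contra! hlt
  have hpos := hess {w | c < f w} (isOpen_lt continuous_const hf) ⟨v, hlt, hv⟩
  have hnull : μ.restrict V {w | ¬ (w ∈ V → f w ≤ c)} = 0 := ae_iff.mp hae
  have hsub : {w | c < f w} ∩ V ⊆ {w | ¬ (w ∈ V → f w ≤ c)} ∩ V :=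
    fun w ⟨hw, hwV⟩ => ⟨fun h => (h hwV).not_gt hw, hwV⟩
  exact hpos.ne' <| nonpos_iff_eq_zero.mp <|
    (measure_mono hsub).trans <| (Measure.le_restrict_apply _ _).trans hnull.le

theorem add_one_le_of_mul_eq_sub_one_mul_add {H a q I : ℝ} (hq : 0 < q) (hI : 0 < I)
    (h : H * q = (a - 1) * q + I) : a ≤ H + 1 := by
  nlinarith

theorem stmt_6_general {n : ℕ} (V : Set (EuclideanSpace ℝ (Fin n)))
    (M : EuclideanSpace ℝ (Fin n) → ℝ)
    (hess : ∀ U : Set (EuclideanSpace ℝ (Fin n)), IsOpen U → (U ∩ V).Nonempty →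
      0 < volume (U ∩ V))
    (μ : EuclideanSpace ℝ (Fin n) → ℝ)
    (hμ : ∀ p, IsGreatest ((fun v => ⟪v, p⟫) '' convexHull ℝ V) (μ p))
    (p : EuclideanSpace ℝ (Fin n))
    (Q : EuclideanSpace ℝ (Fin n) → ℝ)
    (hQpos : ∀ v ∈ V, 0 < Q v) (H : ℝ)
    (heig : ∀ᵐ v ∂(volume.restrict V),
      H * Q v = (⟪v, p⟫ - 1) * Q v + ∫ v' in V, M v' * Q v')
    (hpos : 0 < ∫ v' in V, M v' * Q v') :
    μ p - 1 ≤ H := by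
  have hae : ∀ᵐ v ∂(volume.restrict V), v ∈ V → ⟪v, p⟫ ≤ H + 1 := by
    filter_upwards [heig] with v hv hvV
    exact add_one_le_of_mul_eq_sub_one_mul_add (hQpos v hvV) hpos hv
  have hV := forall_le_of_ae_restrict_le hess (f := fun v => ⟪v, p⟫) (by fun_prop) hae
  obtain ⟨x, hx, hxμ⟩ := (hμ p).1
  obtain ⟨v, hvV, hxv⟩ := (((innerₗ _).flip p).convexOn convex_univ).exists_ge_of_mem_convexHull
    (subset_univ V) hx
  have hμv : μ p ≤ ⟪v, p⟫ := hxμ ▸ hxv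
  linarith [hV v hvV]

/-- If a positive integrable Q and H satisfy the eigenvalue relation
H·Q(v) = (v·p − 1)·Q(v) + ∫_V M Q a.e. on V, with ∫_V M Q > 0, then H ≥ μ(p) − 1.
(The essential support of M is V: every open set meeting V has positive measure in V.) -/
theorem stmt_6 {n : ℕ} (V : Set (EuclideanSpace ℝ (Fin n)))
    (hVc : IsCompact V) (hVne : V.Nonempty)
    (h0 : (0 : EuclideanSpace ℝ (Fin n)) ∈ interior (convexHull ℝ V))
    (M : EuclideanSpace ℝ (Fin n) → ℝ)
    (hM0 : ∀ v, 0 ≤ M v) (hMsupp : Function.support M ⊆ V)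
    (hMint : IntegrableOn M V)
    (hess : ∀ U : Set (EuclideanSpace ℝ (Fin n)), IsOpen U → (U ∩ V).Nonempty →
      0 < volume (U ∩ V))
    (μ : EuclideanSpace ℝ (Fin n) → ℝ)
    (hμ : ∀ p, IsGreatest ((fun v => ⟪v, p⟫) '' convexHull ℝ V) (μ p))
    (p : EuclideanSpace ℝ (Fin n))
    (Q : EuclideanSpace ℝ (Fin n) → ℝ) (hQint : IntegrableOn Q V)
    (hQpos : ∀ v ∈ V, 0 < Q v) (H : ℝ)
    (heig : ∀ᵐ v ∂(volume.restrict V),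
      H * Q v = (⟪v, p⟫ - 1) * Q v + ∫ v' in V, M v' * Q v')
    (hpos : 0 < ∫ v' in V, M v' * Q v') :
    μ p - 1 ≤ H :=
  stmt_6_general V M hess μ hμ p Q hQpos H heig hpos
end

section
/- The hamiltonian H is continuous on ℝⁿ, where H(p) is defined as μ(p) − 1 for p ∈ Sing(M) and as the unique solution of ∫_V M(v)/(1 + H(p) − v·p) dv = 1 for p ∉ Sing(M). -/
/-!
The support function `μ` of the compact set `Conv(V)` is Lipschitz. For fixed `p`, the dispersion
integral `F(p, h) = ∫_V M(v) / (1 + h - v·p) dv` is strictly decreasing in `h > μ(p) - 1`, and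
for fixed `h` it is continuous in `p` wherever `h > μ(p) - 1`, by dominated convergence. Whether
`p` is singular (`F(p, ·) ≤ 1`) or regular (`F(p, H(p)) = 1`), for `h > μ(p) - 1` this gives
`H(p) < h ↔ F(p, h) < 1` and `h < H(p) ↔ 1 < F(p, h)`; the right-hand sides are open conditions
in `p`, so `H` is both upper and lower semicontinuous.
-/

open MeasureTheory Set Filter
open scoped RealInnerProductSpace ENNReal

section Threshold

variable {f : ℝ → ℝ} {m x h : ℝ}

theorem StrictAntiOn.lt_iff_apply_lt_one (hf : StrictAntiOn f (Ioi m))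
    (hx : (x = m ∧ ∀ y, m < y → f y ≤ 1) ∨ (m < x ∧ f x = 1)) (hh : m < h) :
    x < h ↔ f h < 1 := by
  rcases hx with ⟨rfl, hle⟩ | ⟨hmx, hfx⟩
  · obtain ⟨y, hxy, hyh⟩ := exists_between hh
    exact iff_of_true hh ((hf hxy hh hyh).trans_le (hle y hxy))
  · rw [← hfx]
    exact (hf.lt_iff_gt hh hmx).symm

theorem StrictAntiOn.lt_iff_one_lt_apply (hf : StrictAntiOn f (Ioi m))
    (hx : (x = m ∧ ∀ y, m < y → f y ≤ 1) ∨ (m < x ∧ f x = 1)) (hh : m < h) :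
    h < x ↔ 1 < f h := by
  rcases hx with ⟨rfl, hle⟩ | ⟨hmx, hfx⟩
  · exact iff_of_false hh.not_gt (hle h hh).not_gt
  · rw [← hfx]
    exact (hf.lt_iff_gt hmx hh).symm

theorem continuous_of_forall_lt_iff {X : Type*} [TopologicalSpace X] {F : X → ℝ → ℝ}
    {m H : X → ℝ} (hm : Continuous m) (hmH : ∀ x, m x ≤ H x)
    (hF : ∀ x₀ h, m x₀ < h → ContinuousAt (fun x => F x h) x₀)
    (hlt : ∀ x h, m x < h → (H x < h ↔ F x h < 1))
    (hgt : ∀ x h, m x < h → (h < H x ↔ 1 < F x h)) :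
    Continuous H := by
  refine continuous_iff_continuousAt.2 fun x₀ =>
    tendsto_order.2 ⟨fun a ha => ?_, fun b hb => ?_⟩
  · rcases lt_or_ge a (m x₀) with ham | ham
    · filter_upwards [(hm.tendsto x₀).eventually_const_lt ham] with x hx
      exact hx.trans_le (hmH x)
    · obtain ⟨c, hac, hcH⟩ := exists_between ha
      have hmc : m x₀ < c := ham.trans_lt hac
      filter_upwards [(hm.tendsto x₀).eventually_lt_const hmc,
        (hF x₀ c hmc).eventually_const_lt ((hgt x₀ c hmc).1 hcH)] with x hmx hFx
      exact hac.trans ((hgt x c hmx).2 hFx)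
  · have hmb : m x₀ < b := (hmH x₀).trans_lt hb
    filter_upwards [(hm.tendsto x₀).eventually_lt_const hmb,
      (hF x₀ b hmb).eventually_lt_const ((hlt x₀ b hmb).1 hb)] with x hmx hFx
    exact (hlt x b hmx).2 hFx

end Threshold

theorem lipschitzWith_of_isGreatest_inner {E : Type*} [NormedAddCommGroup E]
    [InnerProductSpace ℝ E] {s : Set E} {R : ℝ} (hR : ∀ v ∈ s, ‖v‖ ≤ R)
    {μ : E → ℝ}
    (hμ : ∀ p, IsGreatest ((fun v => ⟪v, p⟫) '' s) (μ p)) :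
    LipschitzWith R.toNNReal μ :=
  LipschitzWith.of_le_add_mul' R fun p q => by
    obtain ⟨v, hv, hvp⟩ := (hμ p).1
    calc μ p = ⟪v, q⟫ + ⟪v, p - q⟫ := by rw [← hvp, inner_sub_right]; ring
      _ ≤ μ q + R * dist p q := by
        gcongr
        · exact (hμ q).2 ⟨v, hv, rfl⟩
        · rw [dist_eq_norm]
          exact (real_inner_le_norm _ _).trans (by gcongr; exact hR v hv)

theorem norm_div_le_inv_mul_norm {a d δ : ℝ} (hδ : 0 < δ) (hd : δ ≤ d) :
    ‖a / d‖ ≤ δ⁻¹ * ‖a‖ := by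
  rw [norm_div, Real.norm_of_nonneg (hδ.le.trans hd), div_eq_inv_mul]
  gcongr

section Dispersion

variable {E : Type*} [NormedAddCommGroup E] [InnerProductSpace ℝ E] [MeasurableSpace E]
  [OpensMeasurableSpace E] {ν : Measure E} {M : E → ℝ} {p : E} {c h : ℝ}

noncomputable def dispersion (ν : Measure E) (M : E → ℝ) (p : E) (h : ℝ) : ℝ :=
  ∫ v, M v / (1 + h - ⟪v, p⟫) ∂ν

theorem aestronglyMeasurable_div_inner (hM : AEStronglyMeasurable M ν) (p : E) (h : ℝ) :
    AEStronglyMeasurable (fun v => M v / (1 + h - ⟪v, p⟫)) ν :=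
  (hM.aemeasurable.div (by fun_prop : Measurable fun v : E => 1 + h - ⟪v, p⟫).aemeasurable)
    |>.aestronglyMeasurable

theorem integrable_div_inner (hM : Integrable M ν) (hp : ∀ᵐ v ∂ν, ⟪v, p⟫ ≤ c)
    (hh : c - 1 < h) : Integrable (fun v => M v / (1 + h - ⟪v, p⟫)) ν := by
  refine (hM.norm.const_mul (1 + h - c)⁻¹).mono'
    (aestronglyMeasurable_div_inner hM.aestronglyMeasurable p h) ?_
  filter_upwards [hp] with v hv
  exact norm_div_le_inv_mul_norm (by linarith) (by linarith)

theorem strictAntiOn_dispersion (hM0 : 0 ≤ᵐ[ν] M) (hM : Integrable M ν)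
    (hMpos : 0 < ∫ v, M v ∂ν) (hp : ∀ᵐ v ∂ν, ⟪v, p⟫ ≤ c) :
    StrictAntiOn (dispersion ν M p) (Ioi (c - 1)) := by
  intro a ha b hb hab
  have hia := integrable_div_inner hM hp ha
  have hib := integrable_div_inner hM hp hb
  have hdiff_nonneg :
      0 ≤ᵐ[ν] fun v => M v / (1 + a - ⟪v, p⟫) - M v / (1 + b - ⟪v, p⟫) := by
    filter_upwards [hp, hM0] with v hv hMv
    exact sub_nonneg.2
      (div_le_div_of_nonneg_left hMv (by linarith [mem_Ioi.1 ha]) (by linarith))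
  have hsupp : Function.support M ≤ᵐ[ν]
      Function.support fun v => M v / (1 + a - ⟪v, p⟫) - M v / (1 + b - ⟪v, p⟫) := by
    filter_upwards [hp] with v hv hMv
    refine sub_ne_zero.2 fun heq => ?_
    rw [div_eq_div_iff (by linarith [mem_Ioi.1 ha]) (by linarith [mem_Ioi.1 hb])] at heq
    linarith [mul_left_cancel₀ hMv heq]
  have hpos := (integral_pos_iff_support_of_nonneg_ae hdiff_nonneg (hia.sub hib)).2
    (((integral_pos_iff_support_of_nonneg_ae hM0 hM).1 hMpos).trans_le (measure_mono_ae hsupp))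
  rw [integral_sub hia hib] at hpos
  exact sub_pos.1 hpos

theorem dispersion_le_one (hM0 : 0 ≤ᵐ[ν] M) (hM : Integrable M ν)
    (hp : ∀ᵐ v ∂ν, ⟪v, p⟫ ≤ c) (hh : c - 1 < h)
    (hsing : ∫⁻ v, ENNReal.ofReal (M v) / ENNReal.ofReal (c - ⟪v, p⟫) ∂ν ≤ 1) :
    dispersion ν M p h ≤ 1 := by
  have hnonneg : 0 ≤ᵐ[ν] fun v => M v / (1 + h - ⟪v, p⟫) := by
    filter_upwards [hp, hM0] with v hv hMv
    exact div_nonneg hMv (by linarith)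
  refine ENNReal.ofReal_le_one.1 (le_trans ?_ hsing)
  rw [dispersion, ofReal_integral_eq_lintegral_ofReal (integrable_div_inner hM hp hh) hnonneg]
  refine lintegral_mono_ae ?_
  filter_upwards [hp] with v hv
  rw [ENNReal.ofReal_div_of_pos (by linarith)]
  exact ENNReal.div_le_div_left (ENNReal.ofReal_le_ofReal (by linarith)) _

theorem continuousAt_dispersion {μ : E → ℝ} {p₀ : E} (hM : Integrable M ν)
    (hμ : ∀ p, ∀ᵐ v ∂ν, ⟪v, p⟫ ≤ μ p) (hμc : ContinuousAt μ p₀)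
    (hh : μ p₀ - 1 < h) :
    ContinuousAt (fun p => dispersion ν M p h) p₀ := by
  set δ := 1 + h - μ p₀
  have hδ : 0 < δ := by linarith
  refine continuousAt_of_dominated (bound := fun v => (δ / 2)⁻¹ * ‖M v‖)
    (Eventually.of_forall fun p => aestronglyMeasurable_div_inner hM.aestronglyMeasurable p h)
    ?_ (hM.norm.const_mul _) ?_
  · filter_upwards [hμc.eventually_lt_const (show μ p₀ < μ p₀ + δ / 2 by linarith)]
      with p hp
    filter_upwards [hμ p] with v hv
    exact norm_div_le_inv_mul_norm (half_pos hδ) (by linarith)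
  · filter_upwards [hμ p₀] with v hv
    exact continuousAt_const.div (by fun_prop) (by linarith)

end Dispersion

theorem stmt_12_general {n : ℕ} (V : Set (EuclideanSpace ℝ (Fin n)))
    (hVc : IsCompact V)
    (M : EuclideanSpace ℝ (Fin n) → ℝ)
    (hM0 : ∀ v, 0 ≤ M v)
    (hMint : IntegrableOn M V) (hM1 : ∫ v in V, M v = 1)
    (μ : EuclideanSpace ℝ (Fin n) → ℝ)
    (hμ : ∀ p, IsGreatest ((fun v => ⟪v, p⟫) '' convexHull ℝ V) (μ p))
    (Sing : Set (EuclideanSpace ℝ (Fin n)))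
    (hSing : Sing = {p : EuclideanSpace ℝ (Fin n) |
      ∫⁻ v in V, ENNReal.ofReal (M v) / ENNReal.ofReal (μ p - ⟪v, p⟫) ≤ 1})
    (H : EuclideanSpace ℝ (Fin n) → ℝ)
    (hHsing : ∀ p ∈ Sing, H p = μ p - 1)
    (hHreg : ∀ p ∉ Sing, μ p - 1 < H p ∧ ∫ v in V, M v / (1 + H p - ⟪v, p⟫) = 1) :
    Continuous H := by
  have hbound : ∀ p, ∀ᵐ v ∂volume.restrict V, ⟪v, p⟫ ≤ μ p := fun p =>
    (ae_restrict_mem hVc.measurableSet).mono fun v hv =>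
      (hμ p).2 ⟨v, subset_convexHull ℝ V hv, rfl⟩
  obtain ⟨R, hR⟩ := (isBounded_convexHull.2 hVc.isBounded).exists_norm_le
  have hμc : Continuous μ := (lipschitzWith_of_isGreatest_inner hR hμ).continuous
  have hM0' : 0 ≤ᵐ[volume.restrict V] M := ae_of_all _ hM0
  have hanti p := strictAntiOn_dispersion hM0' hMint (hM1 ▸ one_pos) (hbound p)
  have hroot : ∀ p,
      (H p = μ p - 1 ∧ ∀ h, μ p - 1 < h → dispersion (volume.restrict V) M p h ≤ 1) ∨
      (μ p - 1 < H p ∧ dispersion (volume.restrict V) M p (H p) = 1) := by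
    intro p
    by_cases hp : p ∈ Sing
    · refine .inl ⟨hHsing p hp, fun h hh =>
        dispersion_le_one hM0' hMint (hbound p) hh ?_⟩
      rw [hSing] at hp
      exact hp
    · exact .inr (hHreg p hp)
  refine continuous_of_forall_lt_iff (hμc.sub continuous_const) (fun p => ?_)
    (fun p₀ h hh => continuousAt_dispersion hMint hbound hμc.continuousAt hh)
    (fun p h hh => (hanti p).lt_iff_apply_lt_one (hroot p) hh)
    (fun p h hh => (hanti p).lt_iff_one_lt_apply (hroot p) hh)
  rcases hroot p with ⟨hH, -⟩ | ⟨hH, -⟩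
  exacts [hH.ge, hH.le]

/-- The hamiltonian H, equal to μ(p) − 1 on Sing(M) and defined on Sing(M)ᶜ by
∫_V M(v)/(1 + H(p) − v·p) dv = 1 with H(p) > μ(p) − 1, is continuous on ℝⁿ. -/
theorem stmt_12 {n : ℕ} (V : Set (EuclideanSpace ℝ (Fin n)))
    (hVc : IsCompact V) (hVne : V.Nonempty)
    (h0 : (0 : EuclideanSpace ℝ (Fin n)) ∈ interior (convexHull ℝ V))
    (M : EuclideanSpace ℝ (Fin n) → ℝ)
    (hM0 : ∀ v, 0 ≤ M v) (hMsupp : Function.support M ⊆ V)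
    (hMint : IntegrableOn M V) (hM1 : ∫ v in V, M v = 1)
    (μ : EuclideanSpace ℝ (Fin n) → ℝ)
    (hμ : ∀ p, IsGreatest ((fun v => ⟪v, p⟫) '' convexHull ℝ V) (μ p))
    (Sing : Set (EuclideanSpace ℝ (Fin n)))
    (hSing : Sing = {p : EuclideanSpace ℝ (Fin n) |
      ∫⁻ v in V, ENNReal.ofReal (M v) / ENNReal.ofReal (μ p - ⟪v, p⟫) ≤ 1})
    (H : EuclideanSpace ℝ (Fin n) → ℝ)
    (hHsing : ∀ p ∈ Sing, H p = μ p - 1)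
    (hHreg : ∀ p ∉ Sing, μ p - 1 < H p ∧ ∫ v in V, M v / (1 + H p - ⟪v, p⟫) = 1) :
    Continuous H :=
  stmt_12_general V hVc M hM0 hMint hM1 μ hμ Sing hSing H hHsing hHreg
end
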